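/- For all p ∈ (1, 1.7], the inequality (4^p + 2)^{1/p}·(2·3^{p/(p−1)} + 1)^{(p−1)/p} ≤ 18 holds. -/

import Mathlib

/-!
Put `q = p / (p - 1)`. Splitting a constant `c > 0` between the two factors,
`x ^ (1/p) * y ^ (1/q) ≤ a * b` as soon as `x ≤ a ^ p * c ^ (1 - p)` and `y ≤ b ^ q * c`.
Take `a = 6`, `b = 3`, `c = 52/25`. The bound on `y = 2 * 3 ^ q + 1` only needs `3 ^ q ≥ 25/2`,
true since `q ≥ 17/7`. The bound on `x = 4 ^ p + 2` rescales to
`(104/75) ^ p + 2 * (26/75) ^ p ≤ 52/25`; the left side is convex in `p`, so it suffices to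
check the endpoints `p = 1` (equality) and `p = 17/10`.
-/

open Real Set

theorem rpow_natCast_div_le_iff {x y : ℝ} (hx : 0 ≤ x) (hy : 0 ≤ y) (n : ℕ) {d : ℕ}
    (hd : d ≠ 0) : x ^ ((n : ℝ) / d) ≤ y ↔ x ^ n ≤ y ^ d := by
  rw [← pow_le_pow_iff_left₀ (by positivity) hy hd, ← rpow_mul_natCast hx,
    div_mul_cancel₀ _ (Nat.cast_ne_zero.2 hd), rpow_natCast]

theorem le_rpow_natCast_div_iff {x y : ℝ} (hx : 0 ≤ x) (hy : 0 ≤ y) (n : ℕ) {d : ℕ}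
    (hd : d ≠ 0) : y ≤ x ^ ((n : ℝ) / d) ↔ y ^ d ≤ x ^ n := by
  rw [← pow_le_pow_iff_left₀ hy (by positivity) hd, ← rpow_mul_natCast hx,
    div_mul_cancel₀ _ (Nat.cast_ne_zero.2 hd), rpow_natCast]

theorem Real.HolderConjugate.rpow_one_div_mul_rpow_one_div_le {p q x y a b c : ℝ}
    (hpq : p.HolderConjugate q) (hx : 0 ≤ x) (hy : 0 ≤ y) (ha : 0 ≤ a) (hb : 0 ≤ b)
    (hc : 0 < c) (hxa : x ≤ a ^ p * c ^ (1 - p)) (hyb : y ≤ b ^ q * c) :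
    x ^ (1 / p) * y ^ (1 / q) ≤ a * b := by
  have hp := hpq.pos
  have hq := hpq.symm.pos
  have hx' : x ^ (1 / p) ≤ a * c ^ (1 / p - 1) := calc
    x ^ (1 / p) ≤ (a ^ p * c ^ (1 - p)) ^ (1 / p) := by gcongr
    _ = a * c ^ (1 / p - 1) := by
      rw [mul_rpow (by positivity) (by positivity), ← rpow_mul ha, ← rpow_mul hc.le,
        mul_one_div_cancel hp.ne', rpow_one]
      congr 2
      field_simp
  have hy' : y ^ (1 / q) ≤ b * c ^ (1 / q) := calc
    y ^ (1 / q) ≤ (b ^ q * c) ^ (1 / q) := by gcongr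
    _ = b * c ^ (1 / q) := by
      rw [mul_rpow (by positivity) hc.le, ← rpow_mul hb, mul_one_div_cancel hq.ne', rpow_one]
  have hexp : 1 / p - 1 + 1 / q = 0 := by
    have := hpq.inv_add_inv_eq_one
    simp only [one_div]
    linarith
  calc x ^ (1 / p) * y ^ (1 / q) ≤ (a * c ^ (1 / p - 1)) * (b * c ^ (1 / q)) := by
        gcongr
    _ = a * b := by
      rw [mul_mul_mul_comm, ← rpow_add hc, hexp, rpow_zero, mul_one]

theorem rpow_add_two_mul_rpow_le (p : ℝ) (hp : p ∈ Icc 1 (17 / 10)) :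
    (104 / 75 : ℝ) ^ p + 2 * (26 / 75 : ℝ) ^ p ≤ 52 / 25 := by
  have hconv : ConvexOn ℝ univ fun t : ℝ ↦ (104 / 75 : ℝ) ^ t + 2 * (26 / 75 : ℝ) ^ t :=
    (convexOn_rpow_left (by norm_num)).add ((convexOn_rpow_left (by norm_num)).smul (by norm_num))
  have h1 : (104 / 75 : ℝ) ^ (17 / 10 : ℝ) ≤ 17434 / 10000 := by
    have := (rpow_natCast_div_le_iff (x := 104 / 75) (y := 17434 / 10000) (by norm_num)
      (by norm_num) 17 (d := 10) (by norm_num)).2 (by norm_num)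
    exact_mod_cast this
  have h2 : (26 / 75 : ℝ) ^ (17 / 10 : ℝ) ≤ 1653 / 10000 := by
    have := (rpow_natCast_div_le_iff (x := 26 / 75) (y := 1653 / 10000) (by norm_num)
      (by norm_num) 17 (d := 10) (by norm_num)).2 (by norm_num)
    exact_mod_cast this
  refine (hconv.le_on_segment (mem_univ 1) (mem_univ (17 / 10)) ?_).trans (max_le ?_ ?_)
  · rwa [segment_eq_Icc (by norm_num)]
  · norm_num
  · linarith

theorem four_rpow_add_two_le (p : ℝ) (hp : p ∈ Icc 1 (17 / 10)) :
    (4 : ℝ) ^ p + 2 ≤ 6 ^ p * (52 / 25 : ℝ) ^ (1 - p) := by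
  have key : (4 ^ p + 2) * (26 / 75 : ℝ) ^ p ≤ 52 / 25 := by
    have := rpow_add_two_mul_rpow_le p hp
    rwa [show (104 / 75 : ℝ) = 4 * (26 / 75) by norm_num, mul_rpow (by norm_num) (by norm_num),
      ← add_mul] at this
  calc (4 : ℝ) ^ p + 2 ≤ 52 / 25 / (26 / 75 : ℝ) ^ p := by
        rwa [le_div_iff₀ (by positivity)]
    _ = 6 ^ p * (52 / 25 : ℝ) ^ (1 - p) := by
      rw [rpow_sub (by norm_num), rpow_one, show (26 / 75 : ℝ) = 52 / 25 / 6 by norm_num,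
        div_rpow (by norm_num) (by norm_num)]
      field_simp

theorem two_mul_three_rpow_add_one_le {q : ℝ} (hq : 17 / 7 ≤ q) :
    2 * (3 : ℝ) ^ q + 1 ≤ 3 ^ q * (52 / 25) := by
  have h : (25 / 2 : ℝ) ≤ 3 ^ q := calc
    (25 / 2 : ℝ) ≤ 3 ^ (17 / 7 : ℝ) := by
      have := (le_rpow_natCast_div_iff (x := 3) (y := 25 / 2) (by norm_num) (by norm_num) 17
        (d := 7) (by norm_num)).2 (by norm_num)
      exact_mod_cast this
    _ ≤ 3 ^ q := rpow_le_rpow_of_exponent_le (by norm_num) hq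
  linarith

theorem product_le_eighteen (p : ℝ) (hp1 : 1 < p) (hp2 : p ≤ 1.7) :
    ((4 : ℝ) ^ p + 2) ^ (1 / p)
        * (2 * (3 : ℝ) ^ (p / (p - 1)) + 1) ^ ((p - 1) / p) ≤ 18 := by
  have hp : p ∈ Icc 1 (17 / 10) := ⟨hp1.le, by norm_num at hp2 ⊢; exact hp2⟩
  have hq : 17 / 7 ≤ p / (p - 1) := by
    rw [le_div_iff₀ (by linarith)]
    linarith [hp.2]
  rw [← one_div_div p (p - 1)]
  calc ((4 : ℝ) ^ p + 2) ^ (1 / p) * (2 * (3 : ℝ) ^ (p / (p - 1)) + 1) ^ (1 / (p / (p - 1)))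
      ≤ 6 * 3 :=
        (Real.HolderConjugate.conjExponent hp1).rpow_one_div_mul_rpow_one_div_le
          (by positivity) (by positivity) (by norm_num) (by norm_num)
          (by norm_num : (0 : ℝ) < 52 / 25)
          (four_rpow_add_two_le p hp) (two_mul_three_rpow_add_one_le hq)
    _ = 18 := by norm_num
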